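/- Let Γ be a group and V a nonempty, homogeneous, irreducible variety over Γ. Then for every h ∈ Hom_Γ(L_V, Γ), the family {h ∘ α : α ∈ Aut_Γ(L_V)} is a discriminating family of Γ-homomorphisms L_V → Γ. -/

import Mathlib

/-- The group of `Γ`-words in `d` variables: the free product `Γ ∗ F(x₁,…,x_d)`. -/
abbrev GWord (Γ : Type) [Group Γ] (d : ℕ) : Type := Monoid.Coprod Γ (FreeGroup (Fin d))

/-- Evaluation of `Γ`-words at a point of `Γ^d`: the homomorphism which is the identity
on `Γ` and sends the `i`-th variable to `v i`. -/
def evalWord {Γ : Type} [Group Γ] {d : ℕ} (v : Fin d → Γ) : GWord Γ d →* Γ :=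
  Monoid.Coprod.lift (MonoidHom.id Γ) (FreeGroup.lift v)

/-- The variety defined by a set `S` of `Γ`-words. -/
def varietyOf {Γ : Type} [Group Γ] {d : ℕ} (S : Set (GWord Γ d)) : Set (Fin d → Γ) :=
  { v | ∀ w ∈ S, evalWord v w = 1 }

/-- A subset of `Γ^d` is a variety if it is the common zero set of a set of `Γ`-words. -/
def IsVariety {Γ : Type} [Group Γ] {d : ℕ} (V : Set (Fin d → Γ)) : Prop :=
  ∃ S : Set (GWord Γ d), V = varietyOf S

/-- The homomorphism sending a `Γ`-word to the function it defines on `V`. -/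
def wordEval {Γ : Type} [Group Γ] {d : ℕ} (V : Set (Fin d → Γ)) : GWord Γ d →* (↥V → Γ) :=
  Pi.monoidHom fun v => evalWord (v : Fin d → Γ)

/-- The group `L_V` of word maps on `V`, as a subgroup of the group of all
functions `V → Γ` (with pointwise multiplication). -/
def LV {Γ : Type} [Group Γ] {d : ℕ} (V : Set (Fin d → Γ)) : Subgroup (↥V → Γ) :=
  (wordEval V).range

/-- The constant functions, as a homomorphism `Γ →* L_V`. -/
def LV.const {Γ : Type} [Group Γ] {d : ℕ} (V : Set (Fin d → Γ)) : Γ →* ↥(LV V) :=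
  (wordEval V).rangeRestrict.comp Monoid.Coprod.inl

/-- The `i`-th coordinate function, an element of `L_V`. -/
def LV.coord {Γ : Type} [Group Γ] {d : ℕ} (V : Set (Fin d → Γ)) (i : Fin d) : ↥(LV V) :=
  (wordEval V).rangeRestrict (Monoid.Coprod.inr (FreeGroup.of i))

/-- The evaluation homomorphism `h_v : L_V →* Γ` at a point `v ∈ V`. -/
def evalAt {Γ : Type} [Group Γ] {d : ℕ} (V : Set (Fin d → Γ)) (v : ↥V) : ↥(LV V) →* Γ :=
  (Pi.evalMonoidHom (fun _ : ↥V => Γ) v).comp (LV V).subtype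

/-- A family of homomorphisms `L →* Γ` is discriminating if every finite subset of `L`
is mapped injectively by some member of the family. -/
def IsDiscriminating {Γ L : Type} [Group Γ] [Group L] (H : Set (L →* Γ)) : Prop :=
  ∀ F : Finset L, ∃ h ∈ H, Set.InjOn h (F : Set L)

/-- A nonempty variety is irreducible if whenever it is a finite union of subvarieties,
one of them is the whole variety. -/
def IsIrreducibleVariety {Γ : Type} [Group Γ] {d : ℕ} (V : Set (Fin d → Γ)) : Prop :=
  IsVariety V ∧ V.Nonempty ∧
    ∀ (n : ℕ) (W : Fin n → Set (Fin d → Γ)),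
      (∀ k, IsVariety (W k)) → (∀ k, W k ⊆ V) → V = ⋃ k, W k → ∃ k, W k = V

/-- A map between varieties is algebraic if each of its coordinates is a word map. -/
def IsAlgebraicMap {Γ : Type} [Group Γ] {d d' : ℕ} (V : Set (Fin d → Γ))
    (V' : Set (Fin d' → Γ)) (F : ↥V → ↥V') : Prop :=
  ∀ i : Fin d', ∃ w : GWord Γ d, ∀ v : ↥V, (F v : Fin d' → Γ) i = evalWord (v : Fin d → Γ) w

/-- A variety is homogeneous if its algebraic automorphisms act transitively. -/
def IsHomogeneous {Γ : Type} [Group Γ] {d : ℕ} (V : Set (Fin d → Γ)) : Prop :=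
  ∀ v v' : ↥V, ∃ F : ↥V ≃ ↥V,
    IsAlgebraicMap V V ⇑F ∧ IsAlgebraicMap V V ⇑F.symm ∧ F v = v'

/-- An algebraic group over `Γ`: a nonempty variety `V ⊆ Γ^d` with a group law
whose coordinates are word maps on `V × V`. -/
structure AlgGroup (Γ : Type) [Group Γ] (d : ℕ) where
  carrier : Set (Fin d → Γ)
  isVariety : IsVariety carrier
  mul : ↥carrier → ↥carrier → ↥carrier
  one : ↥carrier
  inv : ↥carrier → ↥carrier
  mul_assoc : ∀ a b c, mul (mul a b) c = mul a (mul b c)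
  one_mul : ∀ a, mul one a = a
  mul_one : ∀ a, mul a one = a
  inv_mul : ∀ a, mul (inv a) a = one
  algebraic : ∀ i : Fin d, ∃ w : GWord Γ (d + d), ∀ a b : ↥carrier,
    (mul a b : Fin d → Γ) i = evalWord (Fin.append (a : Fin d → Γ) (b : Fin d → Γ)) w

/-- The group structure on the points of an algebraic group. -/
instance AlgGroup.group {Γ : Type} [Group Γ] {d : ℕ} (G : AlgGroup Γ d) :
    Group ↥G.carrier where
  mul := G.mul
  one := G.one
  inv := G.inv
  mul_assoc := G.mul_assoc
  one_mul := G.one_mul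
  mul_one := G.mul_one
  inv_mul_cancel := G.inv_mul

/-- The `Γ`-generating set of `L_V` consisting of the coordinate functions, their
inverses, and the nontrivial constants. -/
def LV.genSet {Γ : Type} [Group Γ] {d : ℕ} (V : Set (Fin d → Γ)) : Set ↥(LV V) :=
  {f | (∃ i, f = LV.coord V i ∨ f = (LV.coord V i)⁻¹) ∨ ∃ γ : Γ, γ ≠ 1 ∧ f = LV.const V γ}

/-- The length of an element of `L_V`: the minimal length of a word in the coordinate
functions, their inverses, and nontrivial constants representing it. -/
noncomputable def LV.len {Γ : Type} [Group Γ] {d : ℕ} (V : Set (Fin d → Γ))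
    (f : ↥(LV V)) : ℕ :=
  sInf {n | ∃ l : List ↥(LV V), l.length = n ∧ (∀ g ∈ l, g ∈ LV.genSet V) ∧ l.prod = f}
section Aux

variable {Γ : Type} [Group Γ] {d : ℕ}

lemma evalWord_inl (v : Fin d → Γ) (γ : Γ) :
    evalWord v (Monoid.Coprod.inl γ) = γ := by
  simp [evalWord]

lemma evalWord_inr_of (v : Fin d → Γ) (i : Fin d) :
    evalWord v (Monoid.Coprod.inr (FreeGroup.of i)) = v i := by
  simp [evalWord]

lemma mem_of_varietyOf {S : Set (GWord Γ d)} {V : Set (Fin d → Γ)}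
    (hS : V = varietyOf S) (u : ↥V) {w : GWord Γ d} (hw : w ∈ S) :
    evalWord (u : Fin d → Γ) w = 1 := by
  obtain ⟨x, hx⟩ := u
  rw [hS] at hx
  exact hx w hw

lemma LV.coe_const (V : Set (Fin d → Γ)) (γ : Γ) (u : ↥V) :
    ((LV.const V γ : ↥(LV V)) : ↥V → Γ) u = γ := by
  show evalWord (u : Fin d → Γ) (Monoid.Coprod.inl γ) = γ
  exact evalWord_inl _ γ

lemma exists_eval_point (V : Set (Fin d → Γ)) (hV : IsVariety V)
    (h : ↥(LV V) →* Γ) (hh : ∀ γ : Γ, h (LV.const V γ) = γ) :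
    ∃ v : ↥V, ∀ f : ↥(LV V), h f = (f : ↥V → Γ) v := by
  obtain ⟨S, hS⟩ := hV
  set v0 : Fin d → Γ := fun i => h (LV.coord V i) with hv0def
  have key : h.comp (wordEval V).rangeRestrict = evalWord v0 := by
    apply Monoid.Coprod.hom_ext
    · ext γ
      show h ((wordEval V).rangeRestrict (Monoid.Coprod.inl γ))
        = evalWord v0 (Monoid.Coprod.inl γ)
      rw [evalWord_inl]
      exact hh γ
    · apply FreeGroup.ext_hom
      intro i
      show h ((wordEval V).rangeRestrict (Monoid.Coprod.inr (FreeGroup.of i)))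
        = evalWord v0 (Monoid.Coprod.inr (FreeGroup.of i))
      rw [evalWord_inr_of]
      rfl
  have hv0 : v0 ∈ V := by
    rw [hS]
    intro w hw
    have h1 : (wordEval V).rangeRestrict w = 1 := by
      apply Subtype.ext; funext u
      show evalWord (u : Fin d → Γ) w = 1
      exact mem_of_varietyOf hS u hw
    calc evalWord v0 w = (h.comp (wordEval V).rangeRestrict) w := by rw [key]
    _ = 1 := by show h ((wordEval V).rangeRestrict w) = 1; rw [h1]; exact map_one h
  refine ⟨⟨v0, hv0⟩, fun f => ?_⟩
  obtain ⟨w, hw⟩ := f.2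
  have hf : (wordEval V).rangeRestrict w = f := Subtype.ext hw
  calc h f = h ((wordEval V).rangeRestrict w) := by rw [hf]
  _ = (h.comp (wordEval V).rangeRestrict) w := rfl
  _ = evalWord v0 w := by rw [key]
  _ = (f : ↥V → Γ) ⟨v0, hv0⟩ := by rw [← hw]; rfl

lemma precomp_mem (V : Set (Fin d → Γ)) (F : ↥V → ↥V)
    (hF : IsAlgebraicMap V V F) (f : ↥(LV V)) :
    (fun u => (f : ↥V → Γ) (F u)) ∈ LV V := by
  classical
  set σ : GWord Γ d →* GWord Γ d :=
    Monoid.Coprod.lift Monoid.Coprod.inl (FreeGroup.lift fun i => (hF i).choose) with hσ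
  obtain ⟨w, hw⟩ := f.2
  refine ⟨σ w, ?_⟩
  funext u
  have hkey : (evalWord (u : Fin d → Γ)).comp σ = evalWord ((F u : ↥V) : Fin d → Γ) := by
    apply Monoid.Coprod.hom_ext
    · ext γ
      show evalWord (u : Fin d → Γ) (σ (Monoid.Coprod.inl γ))
        = evalWord ((F u : ↥V) : Fin d → Γ) (Monoid.Coprod.inl γ)
      rw [hσ, Monoid.Coprod.lift_apply_inl, evalWord_inl, evalWord_inl]
    · apply FreeGroup.ext_hom
      intro i
      show evalWord (u : Fin d → Γ) (σ (Monoid.Coprod.inr (FreeGroup.of i)))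
        = evalWord ((F u : ↥V) : Fin d → Γ) (Monoid.Coprod.inr (FreeGroup.of i))
      rw [hσ, Monoid.Coprod.lift_apply_inr, FreeGroup.lift_apply_of, evalWord_inr_of]
      exact ((hF i).choose_spec u).symm
  calc wordEval V (σ w) u = ((evalWord (u : Fin d → Γ)).comp σ) w := rfl
  _ = evalWord ((F u : ↥V) : Fin d → Γ) w := by rw [hkey]
  _ = (f : ↥V → Γ) (F u) := by rw [← hw]; rfl

lemma eq_subvariety (V : Set (Fin d → Γ)) (hV : IsVariety V) (f g : ↥(LV V)) :
    ∃ W, IsVariety W ∧ W ⊆ V ∧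
      ∀ v : ↥V, (v : Fin d → Γ) ∈ W ↔ (f : ↥V → Γ) v = (g : ↥V → Γ) v := by
  obtain ⟨S, hS⟩ := hV
  obtain ⟨wf, hwf⟩ := f.2
  obtain ⟨wg, hwg⟩ := g.2
  refine ⟨varietyOf (S ∪ {wf * wg⁻¹}), ⟨_, rfl⟩, ?_, ?_⟩
  · intro v hv
    rw [hS]
    intro w hw
    exact hv w (Set.mem_union_left _ hw)
  · intro v
    have e1 : (f : ↥V → Γ) v = evalWord (v : Fin d → Γ) wf := by rw [← hwf]; rfl
    have e2 : (g : ↥V → Γ) v = evalWord (v : Fin d → Γ) wg := by rw [← hwg]; rfl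
    constructor
    · intro hv
      have := hv (wf * wg⁻¹) (Set.mem_union_right _ rfl)
      rw [map_mul, map_inv] at this
      rw [e1, e2, mul_inv_eq_one.mp this]
    · intro hfg w hw
      rcases hw with hw | hw
      · exact mem_of_varietyOf hS v hw
      · rcases hw with rfl
        rw [map_mul, map_inv, mul_inv_eq_one]
        rw [← e1, ← e2, hfg]

end Aux

/-- if `V` is a nonempty homogeneous irreducible variety then for every
`Γ`-homomorphism `h : L_V → Γ`, the family `{h ∘ α : α ∈ Aut_Γ(L_V)}` is discriminating. -/
theorem stmt_12 {Γ : Type} [Group Γ] {d : ℕ} (V : Set (Fin d → Γ))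
    (hV : IsVariety V) (hne : V.Nonempty) (hhom : IsHomogeneous V)
    (hirr : IsIrreducibleVariety V)
    (h : ↥(LV V) →* Γ) (hh : ∀ γ : Γ, h (LV.const V γ) = γ) :
    IsDiscriminating {h' : ↥(LV V) →* Γ |
      ∃ α : ↥(LV V) ≃* ↥(LV V),
        (∀ γ : Γ, α (LV.const V γ) = LV.const V γ) ∧ h' = h.comp α.toMonoidHom} := by
  classical
  intro Fs
  obtain ⟨v0, hv0⟩ := exists_eval_point V hV h hh
  set P : Finset (↥(LV V) × ↥(LV V)) := (Fs ×ˢ Fs).filter (fun p => p.1 ≠ p.2) with hP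
  choose W hWvar hWsub hWiff using fun p : ↥(LV V) × ↥(LV V) => eq_subvariety V hV p.1 p.2
  have hsep : ∃ v : ↥V, ∀ p ∈ P, (p.1 : ↥V → Γ) v ≠ (p.2 : ↥V → Γ) v := by
    by_contra hc
    push_neg at hc
    set e := P.equivFin with he
    set Wk : Fin P.card → Set (Fin d → Γ) := fun k => W (e.symm k : P) with hWk
    have hcover : V = ⋃ k, Wk k := by
      apply Set.Subset.antisymm
      · intro x hx
        obtain ⟨p, hpP, hpx⟩ := hc ⟨x, hx⟩
        have hxW : x ∈ W p := (hWiff p ⟨x, hx⟩).mpr hpx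
        refine Set.mem_iUnion.mpr ⟨e ⟨p, hpP⟩, ?_⟩
        simpa [hWk, he] using hxW
      · exact Set.iUnion_subset fun k => hWsub _
    obtain ⟨k, hk⟩ := hirr.2.2 P.card Wk (fun k => hWvar _) (fun k => hWsub _) hcover
    set p := (e.symm k : P) with hp
    have hpP : (p : ↥(LV V) × ↥(LV V)) ∈ P := (e.symm k).2
    have hpne : (p : ↥(LV V) × ↥(LV V)).1 ≠ (p : ↥(LV V) × ↥(LV V)).2 :=
      (Finset.mem_filter.mp hpP).2
    have : ∃ u : ↥V, ((p : ↥(LV V) × ↥(LV V)).1 : ↥V → Γ) u ≠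
        ((p : ↥(LV V) × ↥(LV V)).2 : ↥V → Γ) u := by
      by_contra hall
      push_neg at hall
      exact hpne (Subtype.ext (funext hall))
    obtain ⟨u, hu⟩ := this
    have huW : (u : Fin d → Γ) ∈ Wk k := by rw [hk]; exact u.2
    exact hu ((hWiff _ u).mp huW)
  obtain ⟨v, hv⟩ := hsep
  obtain ⟨F, hF, hFsymm, hFv⟩ := hhom v0 v
  let A : ↥(LV V) →* ↥(LV V) :=
    { toFun := fun f => ⟨fun u => (f : ↥V → Γ) (F u), precomp_mem V (⇑F) hF f⟩
      map_one' := rfl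
      map_mul' := fun f g => rfl }
  let B : ↥(LV V) →* ↥(LV V) :=
    { toFun := fun f => ⟨fun u => (f : ↥V → Γ) (F.symm u), precomp_mem V (⇑F.symm) hFsymm f⟩
      map_one' := rfl
      map_mul' := fun f g => rfl }
  let α : ↥(LV V) ≃* ↥(LV V) :=
    { toFun := A
      invFun := B
      left_inv := fun f => by
        apply Subtype.ext; funext u
        show (f : ↥V → Γ) (F (F.symm u)) = (f : ↥V → Γ) u
        rw [Equiv.apply_symm_apply]
      right_inv := fun f => by
        apply Subtype.ext; funext u
        show (f : ↥V → Γ) (F.symm (F u)) = (f : ↥V → Γ) u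
        rw [Equiv.symm_apply_apply]
      map_mul' := A.map_mul' }
  have hαval : ∀ f : ↥(LV V), h (α f) = (f : ↥V → Γ) v := by
    intro f
    calc h (α f) = ((α f : ↥(LV V)) : ↥V → Γ) v0 := hv0 (α f)
    _ = (f : ↥V → Γ) (F v0) := rfl
    _ = (f : ↥V → Γ) v := by rw [hFv]
  refine ⟨h.comp α.toMonoidHom, ⟨α, ?_, rfl⟩, ?_⟩
  · intro γ
    apply Subtype.ext; funext u
    show ((LV.const V γ : ↥(LV V)) : ↥V → Γ) (F u) = _
    rw [LV.coe_const]
    exact (LV.coe_const V γ u).symm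
  · intro f hf g hg heq
    by_contra hne'
    have hpair : (f, g) ∈ P := by
      rw [hP, Finset.mem_filter, Finset.mem_product]
      exact ⟨⟨hf, hg⟩, hne'⟩
    have := hv (f, g) hpair
    apply this
    have h1 : h (α f) = h (α g) := heq
    rw [hαval, hαval] at h1
    exact h1
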